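/- arXiv:1210.3187 — 2 statements merged into one kernel-verified Lean document; each statement's English description precedes it below -/
import Mathlib

section
/- For the random bipartite graph G(n,n,p) with p ∈ (0,1) fixed, the probability that G(n,n,p) has no perfect matching is at most γ(n) := 2n(1−p)^n + ε_n, where ε_n := 2 Σ_{a=2}^{⌊(n+1)/2⌋} n^{2a−1}(1−p)^{an}(1−p)^{−a²}. Moreover Σ_{n≥1} n·γ(n) < ∞. -/
open Finset MeasureTheory ProbabilityTheory
open scoped Classical

/-- The realized random bipartite graph on `Fin n ⊕ Fin n` built from the infinite array of
edge events `E i j`, `i j : ℕ`: left vertex `i` is adjacent to right vertex `j`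
iff `ω ∈ E i j`. -/
def biGraphN {Ω : Type*} (E : ℕ → ℕ → Set Ω) (n : ℕ) (ω : Ω) :
    SimpleGraph (Fin n ⊕ Fin n) :=
  SimpleGraph.fromRel
    (fun u v => ∃ i j : Fin n, u = Sum.inl i ∧ v = Sum.inr j ∧ ω ∈ E (i : ℕ) (j : ℕ))

/-- `γ(n) = 2n(1−p)^n + ε_n` with
`ε_n = 2 Σ_{a=2}^{⌊(n+1)/2⌋} n^{2a−1}(1−p)^{an}(1−p)^{−a²}`. -/
noncomputable def gammaBound (p : ℝ) (n : ℕ) : ℝ :=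
  2 * n * (1 - p) ^ n +
    2 * ∑ a ∈ Finset.Icc 2 ((n + 1) / 2),
      (n : ℝ) ^ (2 * a - 1) * (1 - p) ^ (a * n) * (1 - p) ^ (-((a : ℤ) ^ 2))

/-!
Without a perfect matching, Hall's theorem gives a set `A` of vertices on one side whose
neighbours all lie in a set `S` of `|A| - 1` vertices on the other side; replacing `(A, S)` by
`(Sᶜ, Aᶜ)` on the opposite side if necessary, `a = |A| ≤ ⌈n/2⌉`. Such a pair forces the
`a(n - a + 1)` edges between `A` and `Sᶜ` to be absent, so a union bound over `a`, `A`, `S` and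
the side gives `∑ₐ 2 C(n,a) C(n,a-1) (1-p)^(a(n-a+1))`. Its term `a = 1` (an isolated vertex) is
`2n(1-p)^n`, and the others are bounded by the summands of `ε_n`.

For summability put `s = √(1-p)` and `rₙ = n² s^(n-1)`: each summand of `ε_n` is at most
`rₙ^a ≤ rₙ²` once `rₙ ≤ 1`, so `n γ(n) = O(n⁶ sⁿ)`.
-/

section Hall

variable {α β : Type*}

def AllNeighborsIn (r : α → β → Prop) (A : Finset α) (S : Finset β) : Prop :=
  ∀ i ∈ A, ∀ j, r i j → j ∈ S

theorem AllNeighborsIn.mono {r : α → β → Prop} {A : Finset α} {S S' : Finset β}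
    (h : AllNeighborsIn r A S) (hS : S ⊆ S') : AllNeighborsIn r A S' :=
  fun i hi j hij => hS (h i hi j hij)

theorem AllNeighborsIn.flip_compl [Fintype α] [DecidableEq α] [Fintype β] [DecidableEq β]
    {r : α → β → Prop} {A : Finset α} {S : Finset β} (h : AllNeighborsIn r A S) :
    AllNeighborsIn (flip r) Sᶜ Aᶜ := by
  intro j hj i hij
  rw [mem_compl] at hj ⊢
  exact fun hi => hj (h i hi j hij)

variable {ι : Type*} [Fintype ι] [DecidableEq ι]

theorem exists_allNeighborsIn_card_lt {r : ι → ι → Prop}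
    (h : ¬ ∃ f : ι → ι, Function.Injective f ∧ ∀ i, r i (f i)) :
    ∃ A S : Finset ι, #S < #A ∧ AllNeighborsIn r A S := by
  let nbhd : ι → Finset ι := fun i => univ.filter (r i)
  obtain ⟨A, hA⟩ : ∃ A : Finset ι, #(A.biUnion nbhd) < #A := by
    by_contra! hHall
    obtain ⟨f, hf, hfr⟩ := (all_card_le_biUnion_card_iff_exists_injective nbhd).1 hHall
    exact h ⟨f, hf, fun i => (mem_filter.1 (hfr i)).2⟩
  refine ⟨A, A.biUnion nbhd, hA, fun i hi j hij => mem_biUnion.2 ⟨i, hi, ?_⟩⟩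
  simpa [nbhd] using hij

theorem exists_allNeighborsIn_card_add_one_eq {r : ι → ι → Prop}
    (h : ¬ ∃ f : ι → ι, Function.Injective f ∧ ∀ i, r i (f i)) :
    ∃ A S : Finset ι, #S + 1 = #A ∧ AllNeighborsIn r A S := by
  obtain ⟨A, N, hNA, hN⟩ := exists_allNeighborsIn_card_lt h
  obtain ⟨S, hNS, -, hS⟩ := exists_subsuperset_card_eq (n := #A - 1) (subset_univ N)
    (by omega) ((Nat.sub_le _ 1).trans (card_le_univ A))
  exact ⟨A, S, by omega, hN.mono hNS⟩

theorem exists_small_allNeighborsIn {r : ι → ι → Prop}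
    (h : ¬ ∃ f : ι → ι, Function.Injective f ∧ ∀ i, r i (f i)) :
    ∃ a ∈ Icc 1 ((Fintype.card ι + 1) / 2), ∃ A S : Finset ι, #A = a ∧ #S = a - 1 ∧
      (AllNeighborsIn r A S ∨ AllNeighborsIn (flip r) A S) := by
  obtain ⟨A, S, hcard, hAS⟩ := exists_allNeighborsIn_card_add_one_eq h
  have hA := card_le_univ A
  by_cases hsmall : #A ≤ (Fintype.card ι + 1) / 2
  · exact ⟨#A, mem_Icc.2 ⟨by omega, hsmall⟩, A, S, rfl, by omega, Or.inl hAS⟩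
  · refine ⟨#Sᶜ, mem_Icc.2 ⟨?_, ?_⟩, Sᶜ, Aᶜ, rfl, ?_, Or.inr hAS.flip_compl⟩ <;>
      simp only [card_compl] <;> omega

end Hall

theorem SimpleGraph.exists_isPerfectMatching_iff_exists_injective {ι : Type*} [Finite ι]
    {G : SimpleGraph (ι ⊕ ι)} (hG : ∀ i i', ¬ G.Adj (.inl i) (.inl i')) :
    (∃ M : G.Subgraph, M.IsPerfectMatching) ↔
      ∃ f : ι → ι, Function.Injective f ∧ ∀ i, G.Adj (.inl i) (.inr (f i)) := by
  constructor
  · rintro ⟨M, hM⟩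
    have hpartner : ∀ i, ∃ j, M.Adj (.inl i) (.inr j) := by
      intro i
      obtain ⟨w, hw, -⟩ := Subgraph.isPerfectMatching_iff.1 hM (.inl i)
      rcases w with i' | j
      · exact (hG i i' (M.adj_sub hw)).elim
      · exact ⟨j, hw⟩
    choose f hf using hpartner
    refine ⟨f, fun i i' hii' => ?_, fun i => M.adj_sub (hf i)⟩
    exact Sum.inl_injective (hM.1.eq_of_adj_right (hf i) (hii' ▸ hf i'))
  · rintro ⟨f, hf, hadj⟩
    let e : ι ≃ ι := Equiv.ofBijective f hf.bijective_of_finite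
    let toRight : Set.range (Sum.inl : ι → ι ⊕ ι) ≃ Set.range (Sum.inr : ι → ι ⊕ ι) :=
      (Equiv.ofInjective _ Sum.inl_injective).symm.trans
        (e.trans (Equiv.ofInjective _ Sum.inr_injective))
    obtain ⟨M, hverts, hM⟩ := Subgraph.IsMatching.exists_of_disjoint_sets_of_equiv
      Set.isCompl_range_inl_range_inr.disjoint toRight (by
        rintro ⟨_, i, rfl⟩
        simpa [toRight, e] using hadj i)
    refine ⟨M, hM, ?_⟩
    rw [Subgraph.isSpanning_iff, hverts, Set.range_inl_union_range_inr]

theorem biGraphN_adj_inl_inr {Ω : Type*} (E : ℕ → ℕ → Set Ω) (n : ℕ) (ω : Ω) (i j : Fin n) :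
    (biGraphN E n ω).Adj (.inl i) (.inr j) ↔ ω ∈ E i j := by
  simp [biGraphN, SimpleGraph.fromRel_adj]

theorem exists_isPerfectMatching_biGraphN_iff {Ω : Type*} (E : ℕ → ℕ → Set Ω) (n : ℕ)
    (ω : Ω) : (∃ M : (biGraphN E n ω).Subgraph, M.IsPerfectMatching) ↔
      ∃ f : Fin n → Fin n, Function.Injective f ∧ ∀ i : Fin n, ω ∈ E i (f i) := by
  rw [SimpleGraph.exists_isPerfectMatching_iff_exists_injective
    (fun i i' => by simp [biGraphN, SimpleGraph.fromRel_adj])]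
  simp only [biGraphN_adj_inl_inr]

section Independence

variable {Ω : Type*} [MeasurableSpace Ω] {μ : Measure Ω} [IsProbabilityMeasure μ] {p : ℝ}

theorem measureReal_biInter_compl_of_iIndepSet {ι : Type*} {F : ι → Set Ω}
    (hF : ∀ i, MeasurableSet (F i)) (hindep : iIndepSet F μ) (hprob : ∀ i, μ.real (F i) = p)
    (s : Finset ι) : μ.real (⋂ i ∈ s, (F i)ᶜ) = (1 - p) ^ #s := by
  have hcompl : ∀ i ∈ s, MeasurableSet[MeasurableSpace.generateFrom {F i}] (F i)ᶜ :=
    fun i _ => (MeasurableSpace.measurableSet_generateFrom (Set.mem_singleton _)).compl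
  rw [measureReal_def, ((iIndepSet_iff_iIndep F μ).1 hindep).meas_biInter hcompl,
    ENNReal.toReal_prod, ← prod_const]
  refine prod_congr rfl fun i _ => ?_
  rw [← measureReal_def, probReal_compl_eq_one_sub (hF i), hprob]

theorem measureReal_allNeighborsIn {α β : Type*} [Fintype β] [DecidableEq β]
    {E : α → β → Set Ω} (hE : ∀ a b, MeasurableSet (E a b))
    (hindep : iIndepSet (Function.uncurry E) μ) (hprob : ∀ a b, μ.real (E a b) = p)
    (A : Finset α) (S : Finset β) :
    μ.real {ω | AllNeighborsIn (fun a b => ω ∈ E a b) A S} = (1 - p) ^ (#A * #Sᶜ) := by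
  have hevent : {ω | AllNeighborsIn (fun a b => ω ∈ E a b) A S} =
      ⋂ x ∈ A ×ˢ Sᶜ, (Function.uncurry E x)ᶜ := by
    ext ω
    simp only [AllNeighborsIn, Set.mem_ofPred_eq, Set.mem_iInter, mem_product, mem_compl,
      Set.mem_compl_iff, Prod.forall, Function.uncurry_apply_pair, and_imp]
    exact forall_congr' fun a => by grind
  rw [hevent, measureReal_biInter_compl_of_iIndepSet (F := Function.uncurry E)
    (fun x => hE x.1 x.2) hindep (fun x => hprob x.1 x.2), card_product]

end Independence

theorem setOf_not_exists_isPerfectMatching_biGraphN_subset {Ω : Type*} (E : ℕ → ℕ → Set Ω)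
    (n : ℕ) :
    {ω | ¬ ∃ M : (biGraphN E n ω).Subgraph, M.IsPerfectMatching} ⊆
      ⋃ a ∈ Icc 1 ((n + 1) / 2), ⋃ A ∈ powersetCard a univ, ⋃ S ∈ powersetCard (a - 1) univ,
        {ω | AllNeighborsIn (fun i j : Fin n => ω ∈ E i j) A S ∨
          AllNeighborsIn (flip fun i j : Fin n => ω ∈ E i j) A S} := by
  intro ω hω
  rw [Set.mem_ofPred_eq, exists_isPerfectMatching_biGraphN_iff] at hω
  obtain ⟨a, ha, A, S, hA, hS, hAS⟩ :=
    exists_small_allNeighborsIn (r := fun i j : Fin n => ω ∈ E i j) hω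
  simp only [Set.mem_iUnion, mem_powersetCard_univ]
  exact ⟨a, by simpa using ha, A, hA, S, hS, hAS⟩

section Union

variable {Ω : Type*} [MeasurableSpace Ω] {μ : Measure Ω} [IsProbabilityMeasure μ] {p : ℝ}
  {E : ℕ → ℕ → Set Ω}

theorem measureReal_allNeighborsIn_or_flip_le (hE : ∀ i j, MeasurableSet (E i j))
    (hindep : iIndepSet (fun q : ℕ × ℕ => E q.1 q.2) μ) (hprob : ∀ i j, μ.real (E i j) = p)
    {n : ℕ} (A S : Finset (Fin n)) :
    μ.real {ω | AllNeighborsIn (fun i j : Fin n => ω ∈ E i j) A S ∨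
      AllNeighborsIn (flip fun i j : Fin n => ω ∈ E i j) A S} ≤ 2 * (1 - p) ^ (#A * #Sᶜ) := by
  have hleft := measureReal_allNeighborsIn (E := fun i j : Fin n => E i j) (fun _ _ => hE _ _)
    (hindep.precomp (g := fun q : Fin n × Fin n => ((q.1 : ℕ), (q.2 : ℕ)))
      fun q q' h => by simpa [Prod.ext_iff, Fin.val_inj] using h)
    (fun _ _ => hprob _ _) A S
  have hright : μ.real {ω | AllNeighborsIn (flip fun i j : Fin n => ω ∈ E i j) A S} = _ :=
    measureReal_allNeighborsIn (E := fun j i : Fin n => E i j) (fun _ _ => hE _ _)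
      (hindep.precomp (g := fun q : Fin n × Fin n => ((q.2 : ℕ), (q.1 : ℕ)))
        fun q q' h => by simpa [Prod.ext_iff, Fin.val_inj, and_comm] using h)
      (fun _ _ => hprob _ _) A S
  rw [Set.ofPred_or, two_mul]
  exact (measureReal_union_le _ _).trans_eq (by rw [hleft, hright])

theorem measureReal_not_exists_isPerfectMatching_le (hE : ∀ i j, MeasurableSet (E i j))
    (hindep : iIndepSet (fun q : ℕ × ℕ => E q.1 q.2) μ) (hprob : ∀ i j, μ.real (E i j) = p)
    (n : ℕ) :
    μ.real {ω | ¬ ∃ M : (biGraphN E n ω).Subgraph, M.IsPerfectMatching} ≤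
      ∑ a ∈ Icc 1 ((n + 1) / 2),
        2 * (n.choose a : ℝ) * n.choose (a - 1) * (1 - p) ^ (a * (n - a + 1)) := by
  refine (measureReal_mono (setOf_not_exists_isPerfectMatching_biGraphN_subset E n)
    (measure_ne_top _ _)).trans ?_
  refine (measureReal_biUnion_finset_le _ _).trans (sum_le_sum fun a ha => ?_)
  refine (measureReal_biUnion_finset_le _ _).trans ?_
  calc _ ≤ ∑ A ∈ powersetCard a (univ : Finset (Fin n)),
        ∑ S ∈ powersetCard (a - 1) (univ : Finset (Fin n)), 2 * (1 - p) ^ (a * (n - a + 1)) := by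
        refine sum_le_sum fun A hA => (measureReal_biUnion_finset_le _ _).trans
          (sum_le_sum fun S hS => ?_)
        rw [mem_powersetCard_univ] at hA hS
        have hSc : #Sᶜ = n - a + 1 := by
          rw [card_compl, hS, Fintype.card_fin]
          grind
        simpa [hA, hSc] using measureReal_allNeighborsIn_or_flip_le hE hindep hprob A S
    _ = _ := by
        simp only [sum_const, card_powersetCard, card_univ, Fintype.card_fin, nsmul_eq_mul]
        ring

end Union

noncomputable def epsilonTerm (q : ℝ) (n a : ℕ) : ℝ :=
  (n : ℝ) ^ (2 * a - 1) * q ^ (a * n) * q ^ (-((a : ℤ) ^ 2))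

theorem gammaBound_eq (p : ℝ) (n : ℕ) :
    gammaBound p n =
      2 * n * (1 - p) ^ n + 2 * ∑ a ∈ Icc 2 ((n + 1) / 2), epsilonTerm (1 - p) n a :=
  rfl

theorem epsilonTerm_eq {q : ℝ} (hq : q ≠ 0) {n a : ℕ} (ha : a ≤ n) :
    epsilonTerm q n a = (n : ℝ) ^ (2 * a - 1) * q ^ (a * (n - a)) := by
  rw [epsilonTerm, mul_assoc, ← zpow_natCast q (a * n), ← zpow_add₀ hq,
    ← zpow_natCast q (a * (n - a))]
  push_cast [Nat.cast_sub ha]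
  ring_nf

theorem epsilonTerm_nonneg {q : ℝ} (hq : 0 < q) (n a : ℕ) : 0 ≤ epsilonTerm q n a := by
  unfold epsilonTerm
  positivity

theorem choose_mul_choose_mul_pow_le_epsilonTerm {q : ℝ} (hq0 : 0 < q) (hq1 : q ≤ 1)
    {n a : ℕ} (ha : a ≤ n) :
    (n.choose a : ℝ) * n.choose (a - 1) * q ^ (a * (n - a + 1)) ≤ epsilonTerm q n a := by
  have hchoose : (n.choose a : ℝ) * n.choose (a - 1) ≤ (n : ℝ) ^ (2 * a - 1) := by
    rw [show 2 * a - 1 = a + (a - 1) by omega, pow_add]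
    exact_mod_cast Nat.mul_le_mul (n.choose_le_pow a) (n.choose_le_pow (a - 1))
  rw [epsilonTerm_eq hq0.ne' ha]
  exact mul_le_mul hchoose (pow_le_pow_of_le_one hq0.le hq1 (Nat.mul_le_mul_left a (by omega)))
    (by positivity) (by positivity)

theorem sum_choose_mul_choose_le_gammaBound {p : ℝ} (hp0 : 0 ≤ p) (hp1 : p < 1) (n : ℕ) :
    ∑ a ∈ Icc 1 ((n + 1) / 2),
      2 * (n.choose a : ℝ) * n.choose (a - 1) * (1 - p) ^ (a * (n - a + 1)) ≤ gammaBound p n := by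
  rcases n.eq_zero_or_pos with rfl | hn
  · simp [gammaBound]
  rw [← Finset.insert_Icc_add_one_left_eq_Icc (by omega : 1 ≤ (n + 1) / 2),
    sum_insert (by simp), gammaBound_eq, mul_sum]
  refine add_le_add (le_of_eq ?_) (sum_le_sum fun a ha => ?_)
  · simp [Nat.sub_add_cancel hn]
  · rw [mul_assoc 2, mul_assoc 2]
    gcongr
    exact choose_mul_choose_mul_pow_le_epsilonTerm (by linarith) (by linarith)
      (by simp at ha; omega)

section Summability

open Filter Topology

variable {s : ℝ}

/-- Since `a ≤ ⌈n/2⌉`, the exponent `2a(n-a)` of `s` is at least `a(n-1)`. -/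
theorem epsilonTerm_sq_le_pow (hs0 : 0 < s) (hs1 : s ≤ 1) {n a : ℕ} (ha1 : 1 ≤ a)
    (ha : a ≤ (n + 1) / 2) : epsilonTerm (s ^ 2) n a ≤ ((n : ℝ) ^ 2 * s ^ (n - 1)) ^ a := by
  have hn : 1 ≤ n := by omega
  rw [epsilonTerm_eq (by positivity) (by omega), mul_pow, ← pow_mul, ← pow_mul, ← pow_mul]
  refine mul_le_mul (pow_le_pow_right₀ (by exact_mod_cast hn) (by omega))
    (pow_le_pow_of_le_one hs0.le hs1 ?_) (by positivity) (by positivity)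
  calc (n - 1) * a ≤ 2 * (n - a) * a := Nat.mul_le_mul_right a (by omega)
    _ = 2 * (a * (n - a)) := by ring

theorem sum_epsilonTerm_sq_le (hs0 : 0 < s) (hs1 : s ≤ 1) {n : ℕ}
    (hr : (n : ℝ) ^ 2 * s ^ (n - 1) ≤ 1) :
    ∑ a ∈ Icc 2 ((n + 1) / 2), epsilonTerm (s ^ 2) n a ≤ n * ((n : ℝ) ^ 2 * s ^ (n - 1)) ^ 2 := by
  set r := (n : ℝ) ^ 2 * s ^ (n - 1)
  calc ∑ a ∈ Icc 2 ((n + 1) / 2), epsilonTerm (s ^ 2) n a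
      ≤ ∑ _a ∈ Icc 2 ((n + 1) / 2), r ^ 2 := sum_le_sum fun a ha => by
        rw [mem_Icc] at ha
        exact (epsilonTerm_sq_le_pow hs0 hs1 (by omega) ha.2).trans
          (pow_le_pow_of_le_one (by positivity) hr ha.1)
    _ ≤ n * r ^ 2 := by
        rw [sum_const, nsmul_eq_mul, Nat.card_Icc]
        gcongr
        exact_mod_cast (by omega : (n + 1) / 2 + 1 - 2 ≤ n)

theorem eventually_sq_mul_pow_pred_le_one (hs0 : 0 < s) (hs1 : s < 1) :
    ∀ᶠ n : ℕ in atTop, (n : ℝ) ^ 2 * s ^ (n - 1) ≤ 1 := by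
  have hlim : Tendsto (fun n : ℕ => s⁻¹ * ((n : ℝ) ^ 2 * s ^ n)) atTop (𝓝 0) := by
    simpa using (tendsto_pow_const_mul_const_pow_of_abs_lt_one 2
      (by rwa [abs_of_pos hs0])).const_mul s⁻¹
  filter_upwards [hlim.eventually_le_const zero_lt_one, eventually_ge_atTop 1] with n hn hn1
  obtain ⟨k, rfl⟩ := Nat.exists_eq_add_of_le' hn1
  refine le_of_eq_of_le ?_ hn
  rw [Nat.add_sub_cancel, pow_succ s k]
  field_simp

theorem summable_natCast_mul_gammaBound {p : ℝ} (hp0 : 0 < p) (hp1 : p < 1) :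
    Summable fun n : ℕ => (n : ℝ) * gammaBound p n := by
  set s := √(1 - p)
  have hs0 : 0 < s := Real.sqrt_pos.2 (by linarith)
  have hsq : s ^ 2 = 1 - p := Real.sq_sqrt (by linarith)
  have hs1 : s < 1 := by nlinarith
  have hsn : ‖s‖ < 1 := by rwa [Real.norm_of_nonneg hs0.le]
  have hmajor : Summable fun n : ℕ => 2 * ((n : ℝ) ^ 2 * s ^ n) + 2 * ((n : ℝ) ^ 6 * s ^ n) :=
    ((summable_pow_mul_geometric_of_norm_lt_one 2 hsn).mul_left 2).add
      ((summable_pow_mul_geometric_of_norm_lt_one 6 hsn).mul_left 2)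
  refine hmajor.of_norm_bounded_eventually_nat ?_
  filter_upwards [eventually_sq_mul_pow_pred_le_one hs0 hs1, eventually_ge_atTop 2]
    with n hr hn
  have hq : (s ^ 2) ^ n ≤ s ^ n := by
    rw [← pow_mul]
    exact pow_le_pow_of_le_one hs0.le hs1.le (by omega)
  have hr2 : ((n : ℝ) ^ 2 * s ^ (n - 1)) ^ 2 ≤ (n : ℝ) ^ 4 * s ^ n := by
    rw [mul_pow, ← pow_mul, ← pow_mul]
    exact mul_le_mul_of_nonneg_left (pow_le_pow_of_le_one hs0.le hs1.le (by omega))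
      (by positivity)
  have hsum := sum_epsilonTerm_sq_le hs0 hs1.le hr
  have hsum0 : 0 ≤ ∑ a ∈ Icc 2 ((n + 1) / 2), epsilonTerm (s ^ 2) n a :=
    sum_nonneg fun a _ => epsilonTerm_nonneg (by positivity) n a
  rw [gammaBound_eq, ← hsq, Real.norm_of_nonneg (by positivity)]
  calc (n : ℝ) * (2 * n * (s ^ 2) ^ n + 2 * ∑ a ∈ Icc 2 ((n + 1) / 2), epsilonTerm (s ^ 2) n a)
      ≤ n * (2 * n * s ^ n + 2 * (n * ((n : ℝ) ^ 4 * s ^ n))) := by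
        gcongr
        exact hsum.trans (mul_le_mul_of_nonneg_left hr2 n.cast_nonneg)
    _ = 2 * ((n : ℝ) ^ 2 * s ^ n) + 2 * ((n : ℝ) ^ 6 * s ^ n) := by ring

end Summability

/-- for `G(n,n,p)` with independent edges of probability `p ∈ (0,1)`, the
probability that there is no perfect matching is at most `γ(n) = 2n(1−p)^n + ε_n`, and
moreover `Σ_{n≥1} n γ(n) < ∞`. -/
theorem no_perfect_matching_prob_le
    {Ω : Type*} [MeasurableSpace Ω] (μ : Measure Ω) [IsProbabilityMeasure μ]
    (p : ℝ) (hp0 : 0 < p) (hp1 : p < 1)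
    (E : ℕ → ℕ → Set Ω)
    (hEmeas : ∀ i j, MeasurableSet (E i j))
    (hindep : iIndepSet (fun q : ℕ × ℕ => E q.1 q.2) μ)
    (hprob : ∀ i j, μ (E i j) = ENNReal.ofReal p) :
    (∀ n : ℕ,
      μ {ω | ¬ ∃ M : (biGraphN E n ω).Subgraph, M.IsPerfectMatching} ≤
        ENNReal.ofReal (gammaBound p n)) ∧
    Summable (fun n : ℕ => (n : ℝ) * gammaBound p n) := by
  have hprobReal (i j : ℕ) : μ.real (E i j) = p := by
    rw [measureReal_def, hprob, ENNReal.toReal_ofReal hp0.le]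
  refine ⟨fun n => ?_, summable_natCast_mul_gammaBound hp0 hp1⟩
  rw [← ofReal_measureReal]
  exact ENNReal.ofReal_le_ofReal
    ((measureReal_not_exists_isPerfectMatching_le hEmeas hindep hprobReal n).trans
      (sum_choose_mul_choose_le_gammaBound hp0.le hp1 n))
end

section
/- Let p_n = √(τ_n · log n / n) with τ_n → ∞ and p_n → 0, fix ε ∈ (0,1/2), and set β_n := (1/2) n p_n (1−ε)·(1 − (1/2)p_n(1−ε)). In the random bipartite graph G(β_n, β_n, p_n), for 2 ≤ a ≤ (β_n+1)/2, the probability of the event F_a (that some side contains a set A with |A| = a, |Γ(A)| = a−1, and A∪Γ(A) connected) satisfies P(F_a) ≤ 2·C(β_n,a)·C(β_n,a−1)·(1−p_n)^{a(β_n−a+1)}·C(a(a−1), 2a−2)·p_n^{2a−2}. -/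
/-!
If `A` lies on one side with `|Γ(A)| = a − 1` and `A ∪ Γ(A)` is connected, then no edge joins `A`
to the `m − a + 1` vertices of the other side outside `B := Γ(A)`: these are `a(m − a + 1)`
independent absent edges. A connected graph on the `2a − 1` vertices of `A ∪ B` has at least
`2a − 2` edges, all of them in `A × B`, so some `(2a − 2)`-subset of `A × B` consists of present
edges. A union bound over `A`, `B` and that subset gives the estimate for `A` on the left side;
transposing the edge array exchanges the two sides and accounts for the factor `2`.
-/

open Finset MeasureTheory ProbabilityTheory Filter
open scoped Classical

/-- The random bipartite graph on `Fin m ⊕ Fin m` determined by edge events `E i j`. -/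
def biGraph {Ω : Type*} {m : ℕ} (E : Fin m → Fin m → Set Ω) (ω : Ω) :
    SimpleGraph (Fin m ⊕ Fin m) :=
  SimpleGraph.fromRel (fun u v => ∃ i j, u = Sum.inl i ∧ v = Sum.inr j ∧ ω ∈ E i j)

/-- The neighborhood of a vertex set `A` in the realized bipartite graph. -/
noncomputable def nbhd {Ω : Type*} {m : ℕ} (E : Fin m → Fin m → Set Ω) (ω : Ω)
    (A : Finset (Fin m ⊕ Fin m)) : Finset (Fin m ⊕ Fin m) :=
  Finset.univ.filter (fun v => ∃ u ∈ A, (biGraph E ω).Adj u v)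

/-- The event `F_a`: some set `A` of size `a` contained in one side has `|Γ(A)| = a − 1`
with the subgraph induced on `A ∪ Γ(A)` connected. -/
def blockingEvent {Ω : Type*} {m : ℕ} (E : Fin m → Fin m → Set Ω) (a : ℕ) : Set Ω :=
  {ω | ∃ A : Finset (Fin m ⊕ Fin m),
    ((∀ v ∈ A, v.isLeft = true) ∨ (∀ v ∈ A, v.isRight = true)) ∧
    A.card = a ∧ (nbhd E ω A).card = a - 1 ∧
    ((biGraph E ω).induce
      ((A ∪ nbhd E ω A : Finset (Fin m ⊕ Fin m)) : Set (Fin m ⊕ Fin m))).Connected}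

open scoped ENNReal

lemma Finset.eq_map_inl_toLeft {α β : Type*} {u : Finset (α ⊕ β)} (h : ∀ v ∈ u, v.isLeft) :
    u = u.toLeft.map .inl := by
  ext (x | x)
  · simp
  · simpa using fun hx => by simpa using h _ hx

lemma Finset.eq_map_inr_toRight {α β : Type*} {u : Finset (α ⊕ β)} (h : ∀ v ∈ u, v.isRight) :
    u = u.toRight.map .inr := by
  ext (x | x)
  · simpa using fun hx => by simpa using h _ hx
  · simp

namespace SimpleGraph

variable {V W : Type*} {G : SimpleGraph V} {G' : SimpleGraph W}

lemma Iso.connected_induce_image (e : G ≃g G') {s : Set V} (h : (G.induce s).Connected) :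
    (G'.induce (e '' s)).Connected :=
  h.map (induceHom e.toHom (Set.mapsTo_image e s)) (Set.surjective_mapsTo_image_restrict e s)

lemma card_le_card_edgeFinset_inter_sym2_add_one [Fintype V] [DecidableEq V]
    [DecidableRel G.Adj] {s : Finset V} (h : (G.induce ↑s).Connected) :
    #s ≤ #(G.edgeFinset ∩ s.sym2) + 1 := by
  have := h.card_vert_le_card_edgeSet_add_one
  rwa [Nat.card_coe_set_eq, Set.ncard_coe_finset, Nat.card_eq_fintype_card, ← edgeFinset_card,
    ← card_filter_edgeFinset_toFinset_subset, filter_edgeFinset_toFinset_subset] at this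

end SimpleGraph

lemma ProbabilityTheory.iIndepSet.measure_biInter_compl_inter_biInter {Ω ι : Type*}
    [MeasurableSpace Ω] {μ : Measure Ω} {F : ι → Set Ω} (h : iIndepSet F μ)
    {T S : Finset ι} (hTS : Disjoint T S) :
    μ ((⋂ i ∈ T, (F i)ᶜ) ∩ ⋂ i ∈ S, F i) = (∏ i ∈ T, μ (F i)ᶜ) * ∏ i ∈ S, μ (F i) := by
  let G i := if i ∈ T then (F i)ᶜ else F i
  have hG : ∀ i ∈ T ∪ S, MeasurableSet[MeasurableSpace.generateFrom {F i}] (G i) := by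
    intro i _
    have hF := MeasurableSpace.measurableSet_generateFrom (Set.mem_singleton (F i))
    by_cases hi : i ∈ T
    · simpa [G, hi] using hF.compl
    · simpa [G, hi] using hF
  have hT : ∀ i ∈ T, G i = (F i)ᶜ := fun i hi => if_pos hi
  have hS : ∀ i ∈ S, G i = F i := fun i hi => if_neg (disjoint_right.1 hTS hi)
  have key := ((iIndepSet_iff_iIndep F μ).1 h).meas_biInter hG
  rw [set_biInter_inter, prod_union hTS, Set.iInter₂_congr hT, Set.iInter₂_congr hS] at key
  rw [key]
  congr 1
  exacts [prod_congr rfl fun i hi => congrArg μ (hT i hi),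
    prod_congr rfl fun i hi => congrArg μ (hS i hi)]

lemma MeasureTheory.measure_biUnion_finset_le_card_nsmul {Ω ι : Type*} [MeasurableSpace Ω]
    {μ : Measure Ω} {s : Finset ι} {f : ι → Set Ω} {c : ℝ≥0∞} (h : ∀ i ∈ s, μ (f i) ≤ c) :
    μ (⋃ i ∈ s, f i) ≤ #s • c :=
  (measure_biUnion_finset_le s f).trans (sum_le_card_nsmul _ _ _ h)

section BiGraph

variable {Ω : Type*} {m : ℕ} (E : Fin m → Fin m → Set Ω) (ω : Ω)

lemma biGraph_adj {u v : Fin m ⊕ Fin m} :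
    (biGraph E ω).Adj u v ↔ ∃ i j, ω ∈ E i j ∧
      ((u = .inl i ∧ v = .inr j) ∨ (u = .inr j ∧ v = .inl i)) := by
  rw [biGraph, SimpleGraph.fromRel_adj]
  constructor
  · rintro ⟨-, ⟨i, j, rfl, rfl, h⟩ | ⟨i, j, rfl, rfl, h⟩⟩
    exacts [⟨i, j, h, .inl ⟨rfl, rfl⟩⟩, ⟨i, j, h, .inr ⟨rfl, rfl⟩⟩]
  · rintro ⟨i, j, h, ⟨rfl, rfl⟩ | ⟨rfl, rfl⟩⟩
    exacts [⟨by simp, .inl ⟨i, j, rfl, rfl, h⟩⟩, ⟨by simp, .inr ⟨i, j, rfl, rfl, h⟩⟩]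

noncomputable def rightNbhd (A : Finset (Fin m)) : Finset (Fin m) :=
  univ.filter fun j => ∃ i ∈ A, ω ∈ E i j

lemma nbhd_map_inl (A : Finset (Fin m)) :
    nbhd E ω (A.map .inl) = (rightNbhd E ω A).map .inr := by
  ext (v | v) <;> simp [nbhd, rightNbhd, biGraph_adj]

lemma nbhd_map_inr (A : Finset (Fin m)) :
    nbhd E ω (A.map .inr) = (rightNbhd (fun i j => E j i) ω A).map .inl := by
  ext (v | v) <;> simp [nbhd, rightNbhd, biGraph_adj]

def biGraphSwap : biGraph E ω ≃g biGraph (fun i j => E j i) ω where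
  toEquiv := Equiv.sumComm _ _
  map_rel_iff' := by
    rintro (u | u) (v | v) <;> simp [biGraph_adj]

lemma card_add_card_le_card_edges_add_one {A B : Finset (Fin m)}
    (h : ((biGraph E ω).induce ↑(A.disjSum B)).Connected) :
    #A + #B ≤ #{q ∈ A ×ˢ B | ω ∈ E q.1 q.2} + 1 := by
  have key := SimpleGraph.card_le_card_edgeFinset_inter_sym2_add_one h
  rw [card_disjSum] at key
  refine key.trans (Nat.add_le_add_right ((card_le_card ?_).trans
    (card_image_le (f := fun q => s(Sum.inl q.1, Sum.inr q.2)))) 1)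
  rintro ⟨u, v⟩ he
  rw [mem_inter, SimpleGraph.mem_edgeFinset, SimpleGraph.mem_edgeSet, biGraph_adj,
    mk_mem_sym2_iff] at he
  obtain ⟨⟨i, j, hij, ⟨rfl, rfl⟩ | ⟨rfl, rfl⟩⟩, hu, hv⟩ := he
  · exact mem_image.2 ⟨(i, j), by simp_all, rfl⟩
  · exact mem_image.2 ⟨(i, j), by simp_all, Sym2.eq_swap⟩

def cutEvent (A B : Finset (Fin m)) (S : Finset (Fin m × Fin m)) : Set Ω :=
  (⋂ q ∈ A ×ˢ Bᶜ, (E q.1 q.2)ᶜ) ∩ ⋂ q ∈ S, E q.1 q.2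

def leftCover (a : ℕ) : Set Ω :=
  ⋃ A ∈ powersetCard a (univ : Finset (Fin m)), ⋃ B ∈ powersetCard (a - 1) (univ : Finset (Fin m)),
    ⋃ S ∈ powersetCard (2 * a - 2) (A ×ˢ B), cutEvent E A B S

lemma mem_leftCover_of_connected {a : ℕ} {A : Finset (Fin m)} (hA : #A = a)
    (hB : #(rightNbhd E ω A) = a - 1)
    (h : ((biGraph E ω).induce ↑(A.disjSum (rightNbhd E ω A))).Connected) :
    ω ∈ leftCover E a := by
  set B := rightNbhd E ω A
  have hedges := card_add_card_le_card_edges_add_one E ω h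
  obtain ⟨S, hSP, hS⟩ := exists_subset_card_eq (s := {q ∈ A ×ˢ B | ω ∈ E q.1 q.2})
    (n := 2 * a - 2) (by omega)
  simp only [leftCover, Set.mem_iUnion, mem_powersetCard, exists_prop]
  refine ⟨A, ⟨subset_univ _, hA⟩, B, ⟨subset_univ _, hB⟩, S,
    ⟨hSP.trans (filter_subset _ _), hS⟩, ?_, ?_⟩
  · simp only [Set.mem_iInter, Set.mem_compl_iff, mem_product, mem_compl, and_imp, Prod.forall]
    exact fun i j hi hj hij => hj (by simpa [B, rightNbhd] using ⟨i, hi, hij⟩)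
  · exact Set.mem_iInter₂.2 fun q hq => (mem_filter.1 (hSP hq)).2

lemma blockingEvent_subset_leftCover_union (a : ℕ) :
    blockingEvent E a ⊆ leftCover E a ∪ leftCover (fun i j => E j i) a := by
  rintro ω ⟨A, hside | hside, hA, hN, hconn⟩
  · left
    rw [eq_map_inl_toLeft hside, nbhd_map_inl] at hN hconn
    rw [eq_map_inl_toLeft hside, card_map] at hA
    rw [← disjUnion_eq_union _ _ (disjoint_map_inl_map_inr _ _), map_inl_disjUnion_map_inr] at hconn
    exact mem_leftCover_of_connected E ω hA (by rwa [card_map] at hN) hconn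
  · right
    rw [eq_map_inr_toRight hside, nbhd_map_inr] at hN hconn
    rw [eq_map_inr_toRight hside, card_map] at hA
    have hswap := (biGraphSwap E ω).connected_induce_image hconn
    rw [show ⇑(biGraphSwap E ω) '' _ =
        ↑(A.toRight.disjSum (rightNbhd (fun i j => E j i) ω A.toRight)) by
      ext (x | x) <;> simp [biGraphSwap]] at hswap
    exact mem_leftCover_of_connected _ ω hA (by rwa [card_map] at hN) hswap

end BiGraph

section Measure

variable {Ω : Type*} [MeasurableSpace Ω] {μ : Measure Ω} {m : ℕ} {E : Fin m → Fin m → Set Ω}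
  {p : ℝ≥0∞}

lemma measure_cutEvent (hE : ∀ i j, MeasurableSet (E i j))
    (hindep : iIndepSet (fun q : Fin m × Fin m => E q.1 q.2) μ) (hprob : ∀ i j, μ (E i j) = p)
    {A B : Finset (Fin m)} {S : Finset (Fin m × Fin m)} (hS : S ⊆ A ×ˢ B) :
    μ (cutEvent E A B S) = (1 - p) ^ (#A * (m - #B)) * p ^ #S := by
  have := hindep.isProbabilityMeasure
  have hTS : Disjoint (A ×ˢ Bᶜ) S :=
    disjoint_of_subset_right hS (disjoint_product.2 (.inr disjoint_compl_left))
  have hcompl : ∀ i j, μ (E i j)ᶜ = 1 - p := fun i j => by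
    rw [prob_compl_eq_one_sub (hE i j), hprob]
  rw [cutEvent, hindep.measure_biInter_compl_inter_biInter hTS]
  simp only [hcompl, hprob, prod_const, card_product, card_compl, Fintype.card_fin]

lemma measure_leftCover_le (hE : ∀ i j, MeasurableSet (E i j))
    (hindep : iIndepSet (fun q : Fin m × Fin m => E q.1 q.2) μ) (hprob : ∀ i j, μ (E i j) = p)
    (a : ℕ) :
    μ (leftCover E a) ≤ ((m.choose a * m.choose (a - 1) * (a * (a - 1)).choose (2 * a - 2) : ℕ)
      : ℝ≥0∞) * ((1 - p) ^ (a * (m - a + 1)) * p ^ (2 * a - 2)) := by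
  have hinner : ∀ A ∈ powersetCard a (univ : Finset (Fin m)),
      ∀ B ∈ powersetCard (a - 1) (univ : Finset (Fin m)),
      μ (⋃ S ∈ powersetCard (2 * a - 2) (A ×ˢ B), cutEvent E A B S) ≤
        (a * (a - 1)).choose (2 * a - 2) • ((1 - p) ^ (a * (m - a + 1)) * p ^ (2 * a - 2)) := by
    intro A hA B hB
    rw [mem_powersetCard] at hA hB
    have ham : a ≤ m := hA.2 ▸ (card_le_univ A).trans_eq (Fintype.card_fin m)
    convert measure_biUnion_finset_le_card_nsmul fun S hS => ((measure_cutEvent hE hindep hprob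
      (mem_powersetCard.1 hS).1).trans ?_).le using 2
    · rw [card_powersetCard, card_product, hA.2, hB.2]
    · rw [(mem_powersetCard.1 hS).2, hA.2, hB.2]
      rcases a.eq_zero_or_pos with rfl | ha0
      · simp
      · rw [show m - (a - 1) = m - a + 1 by omega]
  calc μ (leftCover E a)
      ≤ #(powersetCard a (univ : Finset (Fin m))) • (#(powersetCard (a - 1) (univ : Finset (Fin m)))
          • ((a * (a - 1)).choose (2 * a - 2) • ((1 - p) ^ (a * (m - a + 1)) * p ^ (2 * a - 2)))) :=
        measure_biUnion_finset_le_card_nsmul fun A hA =>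
          measure_biUnion_finset_le_card_nsmul fun B hB => hinner A hA B hB
    _ = _ := by simp only [card_powersetCard, card_univ, Fintype.card_fin, nsmul_eq_mul,
        Nat.cast_mul, mul_assoc]

end Measure

theorem blockingEvent_prob_le_refined_general
    {Ω : Type*} [MeasurableSpace Ω] (μ : Measure Ω) [IsProbabilityMeasure μ]
    (τ : ℕ → ℝ)
    (n m : ℕ)
    (a : ℕ) (ha2 : 2 ≤ a) (ha : (a : ℝ) ≤ ((m : ℝ) + 1) / 2)
    (E : Fin m → Fin m → Set Ω)
    (hEmeas : ∀ i j, MeasurableSet (E i j))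
    (hindep : iIndepSet (fun q : Fin m × Fin m => E q.1 q.2) μ)
    (hprob : ∀ i j, μ (E i j) = ENNReal.ofReal (Real.sqrt (τ n * Real.log n / n))) :
    μ (blockingEvent E a) ≤
      ENNReal.ofReal (2 * (m.choose a) * (m.choose (a - 1)) *
        (1 - Real.sqrt (τ n * Real.log n / n)) ^ (a * (m - a + 1)) *
        ((a * (a - 1)).choose (2 * a - 2)) *
        Real.sqrt (τ n * Real.log n / n) ^ (2 * a - 2)) := by
  set p := Real.sqrt (τ n * Real.log n / n)
  have hp_nonneg : 0 ≤ p := Real.sqrt_nonneg _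
  have hm0 : 0 < m := by
    have : (2 : ℝ) ≤ a := by exact_mod_cast ha2
    exact_mod_cast (show (0 : ℝ) < m by linarith)
  have hp1 : p ≤ 1 := by
    have := prob_le_one (μ := μ) (s := E ⟨0, hm0⟩ ⟨0, hm0⟩)
    rwa [hprob, ENNReal.ofReal_le_one] at this
  have hcompl : 1 - ENNReal.ofReal p = ENNReal.ofReal (1 - p) := by
    rw [ENNReal.ofReal_sub _ hp_nonneg, ENNReal.ofReal_one]
  calc μ (blockingEvent E a)
      ≤ μ (leftCover E a) + μ (leftCover (fun i j => E j i) a) :=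
        (measure_mono (blockingEvent_subset_leftCover_union E a)).trans (measure_union_le _ _)
    _ ≤ _ + _ := add_le_add (measure_leftCover_le hEmeas hindep hprob a)
        (measure_leftCover_le (fun i j => hEmeas j i) (hindep.precomp Prod.swap_injective)
          (fun i j => hprob j i) a)
    _ = _ := by
      rw [← two_mul, hcompl, ← ENNReal.ofReal_pow (by linarith), ← ENNReal.ofReal_pow hp_nonneg,
        ← ENNReal.ofReal_mul (by positivity), ← ENNReal.ofReal_natCast,
        ← ENNReal.ofReal_mul (by positivity), ← ENNReal.ofReal_ofNat 2,
        ← ENNReal.ofReal_mul (by norm_num)]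
      congr 1
      push_cast
      ring

/-- with `p_n = √(τ_n log n / n)`, `τ_n → ∞`, `p_n → 0`, fixed
`ε ∈ (0,1/2)` and `β_n = (1/2) n p_n (1−ε)(1 − (1/2)p_n(1−ε))`, in `G(β_n, β_n, p_n)` the
event `F_a` for `2 ≤ a ≤ (β_n+1)/2` satisfies
`P(F_a) ≤ 2 C(β_n,a) C(β_n,a−1) (1−p_n)^{a(β_n−a+1)} C(a(a−1),2a−2) p_n^{2a−2}`. -/
theorem blockingEvent_prob_le_refined
    {Ω : Type*} [MeasurableSpace Ω] (μ : Measure Ω) [IsProbabilityMeasure μ]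
    (τ : ℕ → ℝ) (hτ : Tendsto τ atTop atTop)
    (hp0 : Tendsto (fun n : ℕ => Real.sqrt (τ n * Real.log n / n)) atTop (nhds 0))
    (ε : ℝ) (hε0 : 0 < ε) (hε : ε < 1 / 2)
    (n m : ℕ)
    (hm : (m : ℝ) = (1 / 2) * n * Real.sqrt (τ n * Real.log n / n) * (1 - ε) *
      (1 - (1 / 2) * Real.sqrt (τ n * Real.log n / n) * (1 - ε)))
    (a : ℕ) (ha2 : 2 ≤ a) (ha : (a : ℝ) ≤ ((m : ℝ) + 1) / 2)
    (E : Fin m → Fin m → Set Ω)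
    (hEmeas : ∀ i j, MeasurableSet (E i j))
    (hindep : iIndepSet (fun q : Fin m × Fin m => E q.1 q.2) μ)
    (hprob : ∀ i j, μ (E i j) = ENNReal.ofReal (Real.sqrt (τ n * Real.log n / n))) :
    μ (blockingEvent E a) ≤
      ENNReal.ofReal (2 * (m.choose a) * (m.choose (a - 1)) *
        (1 - Real.sqrt (τ n * Real.log n / n)) ^ (a * (m - a + 1)) *
        ((a * (a - 1)).choose (2 * a - 2)) *
        Real.sqrt (τ n * Real.log n / n) ^ (2 * a - 2)) :=
  blockingEvent_prob_le_refined_general μ τ n m a ha2 ha E hEmeas hindep hprob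
end
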